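/- arXiv:2603.00445 — 6 statements merged into one kernel-verified Lean document; each statement's English description precedes it below -/
import Mathlib

section
/- Let b > 0 and c ∈ ℝ, and let φ : ℝ → ℝ be three times differentiable with c - φ(x)² > 0 and φ(x) - φ''(x) > 0 for all x ∈ ℝ. Then for every x ∈ ℝ, the function x ↦ (φ(x) - φ''(x))^(2/b) · (c - φ(x)²) has derivative equal to -(2/b) · (φ(x) - φ''(x))^((2-b)/b) · [ (φ(x)² - c)(φ - φ'')'(x) + b φ(x) φ'(x)(φ(x) - φ''(x)) ]. In particular, φ satisfies the traveling-wave equation (φ² - c)(φ - φ'')' + b φ φ' (φ - φ'') = 0 on ℝ if and only if (φ - φ'')^(2/b) (c - φ²) is constant on ℝ. -/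
/-- For `b > 0`, `c ∈ ℝ` and a three-times differentiable `φ : ℝ → ℝ` with
`c - φ(x)² > 0` and `φ(x) - φ''(x) > 0` for all `x`, the function
`x ↦ (φ(x) - φ''(x))^(2/b) · (c - φ(x)²)` has derivative
`-(2/b) · (φ(x) - φ''(x))^((2-b)/b) · [(φ(x)² - c)(φ - φ'')'(x) + b φ(x) φ'(x)(φ(x) - φ''(x))]`
at every `x`; in particular the traveling wave equation
`(φ² - c)(φ - φ'')' + b φ φ' (φ - φ'') = 0` holds on `ℝ` iff
`(φ - φ'')^(2/b)(c - φ²)` is constant on `ℝ`. -/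
theorem stmt0 (b c : ℝ) (hb : 0 < b) (φ : ℝ → ℝ)
    (hφ : Differentiable ℝ φ) (hφ' : Differentiable ℝ (deriv φ))
    (hφ'' : Differentiable ℝ (deriv (deriv φ)))
    (hc : ∀ x, 0 < c - φ x ^ 2) (hm : ∀ x, 0 < φ x - deriv (deriv φ) x) :
    (∀ x : ℝ, HasDerivAt
      (fun x => (φ x - deriv (deriv φ) x) ^ (2 / b) * (c - φ x ^ 2))
      (-(2 / b) * (φ x - deriv (deriv φ) x) ^ ((2 - b) / b) *
        ((φ x ^ 2 - c) * deriv (fun x => φ x - deriv (deriv φ) x) x +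
          b * φ x * deriv φ x * (φ x - deriv (deriv φ) x))) x) ∧
    ((∀ x : ℝ, (φ x ^ 2 - c) * deriv (fun x => φ x - deriv (deriv φ) x) x +
        b * φ x * deriv φ x * (φ x - deriv (deriv φ) x) = 0) ↔
      (∃ K : ℝ, ∀ x : ℝ, (φ x - deriv (deriv φ) x) ^ (2 / b) * (c - φ x ^ 2) = K)) := by
  set m : ℝ → ℝ := fun x => φ x - deriv (deriv φ) x with hmdef
  have hmd : Differentiable ℝ m := hφ.sub hφ''
  have key : ∀ x : ℝ, HasDerivAt
      (fun x => m x ^ (2 / b) * (c - φ x ^ 2))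
      (-(2 / b) * m x ^ ((2 - b) / b) *
        ((φ x ^ 2 - c) * deriv m x + b * φ x * deriv φ x * m x)) x := by
    intro x
    have hmx : 0 < m x := hm x
    have h1 : HasDerivAt m (deriv m x) x := (hmd x).hasDerivAt
    have h2 : HasDerivAt (fun x => m x ^ (2 / b))
        (deriv m x * (2 / b) * m x ^ (2 / b - 1)) x :=
      h1.rpow_const (Or.inl hmx.ne')
    have h3 : HasDerivAt (fun x => c - φ x ^ 2)
        (0 - 2 * φ x ^ 1 * deriv φ x) x := by
      have := ((hφ x).hasDerivAt.fun_pow 2)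
      simpa using (hasDerivAt_const x c).fun_sub (by simpa using this)
    have h4 := h2.fun_mul h3
    refine HasDerivAt.congr_deriv h4 ?_
    have e1 : (2 : ℝ) / b - 1 = (2 - b) / b := by field_simp
    have e2 : m x ^ (2 / b) = m x ^ ((2 - b) / b) * m x := by
      have e : (2:ℝ) / b = (2 - b) / b + 1 := by field_simp; ring
      rw [e, Real.rpow_add hmx, Real.rpow_one]
    rw [e1, e2]
    have hbne : b ≠ 0 := hb.ne'
    field_simp
    ring
  refine ⟨key, ?_, ?_⟩
  · intro hE
    refine ⟨m 0 ^ (2 / b) * (c - φ 0 ^ 2), fun x => ?_⟩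
    have hderiv0 : ∀ y : ℝ, HasDerivAt (fun x => m x ^ (2 / b) * (c - φ x ^ 2)) 0 y := by
      intro y
      have := key y
      rw [hE y] at this
      simpa using this
    have := is_const_of_deriv_eq_zero (f := fun x => m x ^ (2 / b) * (c - φ x ^ 2))
      (fun y => (hderiv0 y).differentiableAt) (fun y => (hderiv0 y).deriv) x 0
    simpa using this
  · rintro ⟨K, hK⟩ x
    have hconst : (fun x => m x ^ (2 / b) * (c - φ x ^ 2)) = fun _ => K := funext hK
    have h0 : HasDerivAt (fun x => m x ^ (2 / b) * (c - φ x ^ 2)) 0 x := by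
      rw [hconst]; exact hasDerivAt_const x K
    have := (key x).unique h0
    have hne : -(2 / b) * m x ^ ((2 - b) / b) ≠ 0 := by
      have h1 : (0:ℝ) < m x ^ ((2 - b) / b) := Real.rpow_pos_of_pos (hm x) _
      have h2 : (0:ℝ) < 2 / b := by positivity
      intro h
      rcases mul_eq_zero.mp h with h | h
      · exact (neg_ne_zero.mpr h2.ne') h
      · exact h1.ne' h
    rcases mul_eq_zero.mp this with h | h
    · exact absurd h hne
    · exact h
end

section
/- Let d ∈ ℝ, c > 0, and let φ : ℝ → ℝ be twice differentiable with φ(x)² < c for all x ∈ ℝ, satisfying φ(x) - φ''(x) = d / (c - φ(x)²) for all x ∈ ℝ (the case b = 2 of the profile equation). Then the function x ↦ (1/2) φ'(x)² - (1/2) φ(x)² + (d/√c) · artanh(φ(x)/√c) is constant on ℝ. -/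
/-- The real inverse hyperbolic tangent: `artanh y = ½ log((1+y)/(1-y))`. -/
noncomputable def artanh (y : ℝ) : ℝ := (1 / 2) * Real.log ((1 + y) / (1 - y))

/-- For `d ∈ ℝ`, `c > 0` and a twice differentiable `φ : ℝ → ℝ` with
`φ(x)² < c` for all `x`, satisfying `φ - φ'' = d / (c - φ²)` (the case `b = 2` of the
profile equation), the function
`x ↦ ½ φ'(x)² - ½ φ(x)² + (d/√c) · artanh(φ(x)/√c)` is constant on `ℝ`. -/
theorem stmt2 (d c : ℝ) (hc : 0 < c) (φ : ℝ → ℝ)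
    (hφ : Differentiable ℝ φ) (hφ' : Differentiable ℝ (deriv φ))
    (hlt : ∀ x, φ x ^ 2 < c)
    (heq : ∀ x, φ x - deriv (deriv φ) x = d / (c - φ x ^ 2)) :
    ∀ x y : ℝ,
      (1 / 2) * (deriv φ x) ^ 2 - (1 / 2) * φ x ^ 2
          + (d / Real.sqrt c) * artanh (φ x / Real.sqrt c)
        = (1 / 2) * (deriv φ y) ^ 2 - (1 / 2) * φ y ^ 2
          + (d / Real.sqrt c) * artanh (φ y / Real.sqrt c) := by
  have hk : 0 < Real.sqrt c := Real.sqrt_pos.mpr hc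
  have hk2 : Real.sqrt c ^ 2 = c := Real.sq_sqrt hc.le
  set k := Real.sqrt c with hkdef
  have habs : ∀ x, |φ x| < k := by
    intro x
    have h := hlt x
    nlinarith [abs_nonneg (φ x), sq_abs (φ x)]
  have hpos1 : ∀ x, 0 < 1 + φ x / k := by
    intro x
    have h1 : -k < φ x := neg_lt_of_abs_lt (habs x)
    have : (-1 : ℝ) < φ x / k := (lt_div_iff₀ hk).mpr (by linarith)
    linarith
  have hpos2 : ∀ x, 0 < 1 - φ x / k := by
    intro x
    have h2 : φ x < k := lt_of_abs_lt (habs x)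
    have : φ x / k < 1 := (div_lt_one hk).mpr h2
    linarith
  have hfun : (fun x => artanh (φ x / k)) =
      fun x => (1 / 2) * (Real.log (1 + φ x / k) - Real.log (1 - φ x / k)) := by
    funext x
    rw [artanh, Real.log_div (hpos1 x).ne' (hpos2 x).ne']
  have key : ∀ x, HasDerivAt
      (fun x => (1 / 2) * (deriv φ x) ^ 2 - (1 / 2) * φ x ^ 2
          + (d / k) * artanh (φ x / k)) 0 x := by
    intro x
    have hφx : HasDerivAt φ (deriv φ x) x := (hφ x).hasDerivAt
    have hφ'x : HasDerivAt (deriv φ) (deriv (deriv φ) x) x := (hφ' x).hasDerivAt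
    have hu : HasDerivAt (fun x => φ x / k) (deriv φ x / k) x := hφx.div_const k
    have hlog1 : HasDerivAt (fun x => Real.log (1 + φ x / k))
        ((deriv φ x / k) / (1 + φ x / k)) x :=
      by simpa using ((hasDerivAt_const x (1 : ℝ)).add hu).log (hpos1 x).ne'
    have hlog2 : HasDerivAt (fun x => Real.log (1 - φ x / k))
        ((-(deriv φ x / k)) / (1 - φ x / k)) x :=
      by simpa using ((hasDerivAt_const x (1 : ℝ)).sub hu).log (hpos2 x).ne'
    have hart : HasDerivAt (fun x => artanh (φ x / k))
        ((1 / 2) * ((deriv φ x / k) / (1 + φ x / k) - (-(deriv φ x / k)) / (1 - φ x / k))) x := by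
      rw [hfun]
      exact (hlog1.sub hlog2).const_mul (1 / 2)
    have h1 : HasDerivAt (fun x => (1 / 2) * (deriv φ x) ^ 2)
        ((1 / 2) * (2 * deriv φ x * deriv (deriv φ) x)) x := by
      convert (hφ'x.pow 2).const_mul ((1:ℝ) / 2) using 1
      · rfl
      · rfl
      · rfl
      push_cast
      ring
    have h2 : HasDerivAt (fun x => (1 / 2) * φ x ^ 2)
        ((1 / 2) * (2 * φ x * deriv φ x)) x := by
      convert (hφx.pow 2).const_mul ((1:ℝ) / 2) using 1
      · rfl
      · rfl
      · rfl
      push_cast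
      ring
    have H := (h1.sub h2).add (hart.const_mul (d / k))
    convert H using 1
    · rfl
    · rfl
    · rfl
    have heqx := heq x
    have hne : c - φ x ^ 2 ≠ 0 := by have := hlt x; nlinarith
    have hdd : deriv (deriv φ) x = φ x - d / (c - φ x ^ 2) := by linarith [heq x]
    have hp1 := (hpos1 x).ne'
    have hp2 := (hpos2 x).ne'
    have hkp : 0 < k + φ x := by have := neg_lt_of_abs_lt (habs x); linarith
    have hkm : 0 < k - φ x := by have := lt_of_abs_lt (habs x); linarith
    rw [hdd, ← hk2] at *
    have hne' : k ^ 2 - φ x ^ 2 ≠ 0 := by nlinarith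
    field_simp
    ring
  exact fun x y =>
    is_const_of_deriv_eq_zero (fun z => (key z).differentiableAt)
      (fun z => (key z).deriv) x y
end

section
/- Let b > 0, d > 0, c > 0. Then there exists a unique φ₀ ∈ (0, √c) such that b d φ₀ (c - φ₀²)^(-(b+2)/2) = 1. Moreover V''(φ) = b d φ (c - φ²)^(-(b+2)/2) - 1 < 0 for all φ ∈ (-√c, φ₀) and V''(φ) > 0 for all φ ∈ (φ₀, √c). -/
/-!
On `[0, √c)` the map `φ ↦ b d φ (c - φ²)^(-(b+2)/2)` is the product of the increasing positive
factor `b d φ` and of a negative power of the decreasing positive quantity `c - φ²`, so it is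
strictly increasing; it vanishes at `0` and blows up as `φ → √c`. Hence it crosses the level `1`
exactly once, at `φ₀`. For `φ ∈ (-√c, 0]` it is nonpositive, which gives the sign on the rest of
`(-√c, φ₀)`.
-/

open Real Set Filter Topology

theorem exists_mem_Ioo_eq_of_continuousOn_Ico_of_tendsto_atTop {a b y : ℝ} {f : ℝ → ℝ}
    (hab : a < b) (hf : ContinuousOn f (Ico a b)) (hfa : f a < y)
    (hfb : Tendsto f (𝓝[<] b) atTop) : ∃ x ∈ Ioo a b, f x = y := by
  obtain ⟨t, hyt, hat, htb⟩ :=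
    ((hfb.eventually_gt_atTop y).and (Ioo_mem_nhdsLT hab)).exists
  obtain ⟨x, hx, hfx⟩ := intermediate_value_Ioo hat.le
    (hf.mono (Icc_subset_Ico_right htb)) ⟨hfa, hyt⟩
  exact ⟨x, ⟨hx.1, hx.2.trans htb⟩, hfx⟩

section

variable {k c e : ℝ}

lemma sub_sq_pos_of_mem_Ioo {φ : ℝ} (hφ : φ ∈ Ioo (-√c) √c) : 0 < c - φ ^ 2 :=
  sub_pos.mpr (sq_lt.mpr hφ)

lemma sub_sq_pos_of_mem_Ico {φ : ℝ} (hφ : φ ∈ Ico 0 √c) : 0 < c - φ ^ 2 :=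
  sub_sq_pos_of_mem_Ioo ⟨by linarith [hφ.1, hφ.2], hφ.2⟩

lemma continuousOn_mul_rpow_sub_sq :
    ContinuousOn (fun φ => k * φ * (c - φ ^ 2) ^ e) (Ico 0 √c) := fun _ hφ =>
  (continuousAt_const.mul continuousAt_id |>.mul
    ((continuousAt_const.sub (continuousAt_id.pow 2)).rpow_const
      (Or.inl (sub_sq_pos_of_mem_Ico hφ).ne'))).continuousWithinAt

lemma strictMonoOn_mul_rpow_sub_sq (hk : 0 < k) (he : e ≤ 0) :
    StrictMonoOn (fun φ => k * φ * (c - φ ^ 2) ^ e) (Ico 0 √c) := by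
  intro x hx y hy hxy
  have hcy := sub_sq_pos_of_mem_Ico hy
  have hpow : (c - x ^ 2) ^ e ≤ (c - y ^ 2) ^ e :=
    rpow_le_rpow_of_nonpos hcy (by nlinarith [hx.1]) he
  have hpos : 0 < (c - x ^ 2) ^ e := rpow_pos_of_pos (sub_sq_pos_of_mem_Ico hx) e
  exact mul_lt_mul (by nlinarith) hpow hpos (by nlinarith [hx.1])

lemma mul_rpow_sub_sq_nonpos (hk : 0 ≤ k) {φ : ℝ} (hφ : φ ∈ Ioc (-√c) 0) :
    k * φ * (c - φ ^ 2) ^ e ≤ 0 :=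
  mul_nonpos_of_nonpos_of_nonneg (mul_nonpos_of_nonneg_of_nonpos hk hφ.2)
    (rpow_nonneg (sub_sq_pos_of_mem_Ioo ⟨hφ.1, by linarith [hφ.1, hφ.2]⟩).le e)

lemma tendsto_sub_sq_nhdsLT_sqrt (hc : 0 < c) :
    Tendsto (fun φ => c - φ ^ 2) (𝓝[<] √c) (𝓝[>] 0) := by
  refine tendsto_nhdsWithin_iff.mpr ⟨?_, ?_⟩
  · have : Tendsto (fun φ => c - φ ^ 2) (𝓝 √c) (𝓝 (c - √c ^ 2)) :=
      (continuous_const.sub (continuous_pow 2)).tendsto _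
    rw [sq_sqrt hc.le, sub_self] at this
    exact this.mono_left nhdsWithin_le_nhds
  · filter_upwards [Ioo_mem_nhdsLT (neg_lt_self (sqrt_pos.mpr hc))] with φ hφ
    exact sub_sq_pos_of_mem_Ioo hφ

lemma tendsto_mul_rpow_sub_sq_atTop (hk : 0 < k) (hc : 0 < c) (he : e < 0) :
    Tendsto (fun φ => k * φ * (c - φ ^ 2) ^ e) (𝓝[<] √c) atTop := by
  have hlin : Tendsto (fun φ => k * φ) (𝓝[<] √c) (𝓝 (k * √c)) :=
    (continuous_const.mul continuous_id).tendsto _ |>.mono_left nhdsWithin_le_nhds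
  exact hlin.pos_mul_atTop (by positivity)
    ((tendsto_rpow_neg_nhdsGT_zero he).comp (tendsto_sub_sq_nhdsLT_sqrt hc))

end

/-- For `b > 0`, `d > 0`, `c > 0`, there exists a unique
`φ₀ ∈ (0, √c)` with `b d φ₀ (c - φ₀²)^(-(b+2)/2) = 1`; moreover
`V''(φ) = b d φ (c - φ²)^(-(b+2)/2) - 1 < 0` for all `φ ∈ (-√c, φ₀)` and `V''(φ) > 0`
for all `φ ∈ (φ₀, √c)`. -/
theorem stmt6 (b d c : ℝ) (hb : 0 < b) (hd : 0 < d) (hc : 0 < c) :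
    ∃ φ₀ ∈ Set.Ioo (0:ℝ) (Real.sqrt c),
      b * d * φ₀ * (c - φ₀ ^ 2) ^ (-(b + 2) / 2) = 1 ∧
      (∀ ψ ∈ Set.Ioo (0:ℝ) (Real.sqrt c),
        b * d * ψ * (c - ψ ^ 2) ^ (-(b + 2) / 2) = 1 → ψ = φ₀) ∧
      (∀ φ ∈ Set.Ioo (-Real.sqrt c) φ₀,
        b * d * φ * (c - φ ^ 2) ^ (-(b + 2) / 2) - 1 < 0) ∧
      (∀ φ ∈ Set.Ioo φ₀ (Real.sqrt c),
        0 < b * d * φ * (c - φ ^ 2) ^ (-(b + 2) / 2) - 1) := by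
  have hk : 0 < b * d := mul_pos hb hd
  have he : -(b + 2) / 2 < 0 := by linarith
  have hmono := strictMonoOn_mul_rpow_sub_sq (c := c) hk he.le
  have hsqrt : 0 < √c := sqrt_pos.mpr hc
  obtain ⟨φ₀, hφ₀, hgφ₀⟩ :=
    exists_mem_Ioo_eq_of_continuousOn_Ico_of_tendsto_atTop (y := 1) hsqrt
      continuousOn_mul_rpow_sub_sq (by simp) (tendsto_mul_rpow_sub_sq_atTop hk hc he)
  have hφ₀' : φ₀ ∈ Ico 0 √c := Ioo_subset_Ico_self hφ₀
  refine ⟨φ₀, hφ₀, hgφ₀, fun ψ hψ hgψ => ?_, fun φ hφ => ?_, fun φ hφ => ?_⟩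
  · exact hmono.injOn (Ioo_subset_Ico_self hψ) hφ₀' (hgψ.trans hgφ₀.symm)
  · rcases le_or_gt φ 0 with hφ0 | hφ0
    · linarith [mul_rpow_sub_sq_nonpos (e := -(b + 2) / 2) hk.le ⟨hφ.1, hφ0⟩]
    · have := hmono ⟨hφ0.le, hφ.2.trans hφ₀.2⟩ hφ₀' hφ.2
      simp only [hgφ₀] at this
      linarith
  · have := hmono hφ₀' ⟨hφ₀.1.le.trans hφ.1.le, hφ.2⟩ hφ.1
    simp only [hgφ₀] at this
    linarith
end

section
/- Let b > 0 and d > 0, and suppose c > (b+1) · b^(-b/(b+1)) · d^(2/(b+1)). Then there exists w₀ ∈ (√(c/(b+1)), √c) such that w₀ (c - w₀²)^(b/2) = d (equivalently V'(w₀) = 0) and b d w₀ (c - w₀²)^(-(b+2)/2) - 1 > 0 (equivalently V''(w₀) > 0); that is, the effective potential V has a nondegenerate critical point, a strict local minimum, in (√(c/(b+1)), √c). -/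
/-- For `b > 0`, `d > 0` and `c > (b+1) b^(-b/(b+1)) d^(2/(b+1))`, there
exists `w₀ ∈ (√(c/(b+1)), √c)` with `w₀ (c - w₀²)^(b/2) = d` (i.e. `V'(w₀) = 0`) and
`b d w₀ (c - w₀²)^(-(b+2)/2) - 1 > 0` (i.e. `V''(w₀) > 0`): the effective potential has a
nondegenerate strict local minimum in `(√(c/(b+1)), √c)`. -/
theorem stmt7 (b d c : ℝ) (hb : 0 < b) (hd : 0 < d)
    (hc : (b + 1) * b ^ (-b / (b + 1)) * d ^ (2 / (b + 1)) < c) :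
    ∃ w₀ ∈ Set.Ioo (Real.sqrt (c / (b + 1))) (Real.sqrt c),
      w₀ * (c - w₀ ^ 2) ^ (b / 2) = d ∧
      0 < b * d * w₀ * (c - w₀ ^ 2) ^ (-(b + 2) / 2) - 1 := by
  have hb1 : (0:ℝ) < b + 1 := by linarith
  have hcpos : 0 < c := lt_trans (by positivity) hc
  set m := c / (b + 1) with hm
  have hmpos : 0 < m := div_pos hcpos hb1
  have hmlt : b ^ (-b / (b + 1)) * d ^ (2 / (b + 1)) < m := by
    rw [hm, lt_div_iff₀ hb1]; nlinarith
  have hmc : m < c := by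
    rw [hm, div_lt_iff₀ hb1]; nlinarith
  set a := Real.sqrt m with ha
  set B := Real.sqrt c with hB
  have haB : a < B := Real.sqrt_lt_sqrt hmpos.le hmc
  set f : ℝ → ℝ := fun w => w * (c - w ^ 2) ^ (b / 2) with hf
  have hcont : ContinuousOn f (Set.Icc a B) := by
    apply ContinuousOn.mul continuousOn_id
    apply ContinuousOn.rpow_const
    · exact continuousOn_const.sub (continuous_pow 2).continuousOn
    · intro x _; right; positivity
  have hfB : f B = 0 := by
    simp [hf, hB, Real.sq_sqrt hcpos.le,
      Real.zero_rpow (by positivity : b / 2 ≠ 0)]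
  have hfa : d < f a := by
    have ha2 : a ^ 2 = m := Real.sq_sqrt hmpos.le
    have hcm : c - m = b * m := by
      rw [hm]; field_simp; ring
    have hfa' : f a = b ^ (b / 2) * m ^ ((b + 1) / 2) := by
      rw [hf]
      simp only [ha2, hcm]
      rw [Real.mul_rpow hb.le hmpos.le, ha, Real.sqrt_eq_rpow]
      rw [show (1:ℝ)/2 = (1:ℝ)/2 from rfl]
      rw [mul_comm (b ^ (b/2)) _, ← mul_assoc, ← Real.rpow_add hmpos]
      ring_nf
    rw [hfa']
    have key : (b ^ (-b / (b + 1)) * d ^ (2 / (b + 1))) ^ ((b + 1) / 2)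
        < m ^ ((b + 1) / 2) := by
      apply Real.rpow_lt_rpow (by positivity) hmlt (by positivity)
    have hL : (b ^ (-b / (b + 1)) * d ^ (2 / (b + 1))) ^ ((b + 1) / 2)
        = b ^ (-b / 2) * d := by
      rw [Real.mul_rpow (by positivity) (by positivity),
        ← Real.rpow_mul hb.le, ← Real.rpow_mul hd.le,
        show -b / (b + 1) * ((b + 1) / 2) = -b / 2 by field_simp,
        show 2 / (b + 1) * ((b + 1) / 2) = 1 by field_simp,
        Real.rpow_one]
    rw [hL] at key
    have hbb : b ^ (b / 2) * b ^ (-b / 2) = 1 := by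
      rw [← Real.rpow_add hb, show b / 2 + -b / 2 = 0 by ring, Real.rpow_zero]
    have hbpos : (0:ℝ) < b ^ (b / 2) := by positivity
    calc d = b ^ (b / 2) * (b ^ (-b / 2) * d) := by rw [← mul_assoc, hbb, one_mul]
      _ < b ^ (b / 2) * m ^ ((b + 1) / 2) := by
          exact (mul_lt_mul_iff_right₀ hbpos).mpr key
  have hd_mem : d ∈ Set.Ioo (f B) (f a) := ⟨by rw [hfB]; exact hd, hfa⟩
  obtain ⟨w₀, hw₀mem, hw₀⟩ := intermediate_value_Ioo' haB.le hcont hd_mem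
  have hw₀pos : 0 < w₀ := lt_of_le_of_lt (Real.sqrt_nonneg m) hw₀mem.1
  have hw₀sq : c / (b + 1) < w₀ ^ 2 := by
    have h1 : m < w₀ ^ 2 := (Real.sqrt_lt' hw₀pos).mp hw₀mem.1
    simpa [hm] using h1
  have hw₀lt : w₀ ^ 2 < c := by
    have := hw₀mem.2
    nlinarith [Real.sq_sqrt hcpos.le, this, hw₀pos]
  have hu : 0 < c - w₀ ^ 2 := by linarith
  refine ⟨w₀, hw₀mem, hw₀, ?_⟩
  have hkey : b * d * w₀ * (c - w₀ ^ 2) ^ (-(b + 2) / 2)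
      = b * w₀ ^ 2 / (c - w₀ ^ 2) := by
    rw [← hw₀]
    rw [show b * (w₀ * (c - w₀ ^ 2) ^ (b / 2)) * w₀ * (c - w₀ ^ 2) ^ (-(b + 2) / 2)
        = b * w₀ ^ 2 * ((c - w₀ ^ 2) ^ (b / 2) * (c - w₀ ^ 2) ^ (-(b + 2) / 2)) by ring]
    rw [← Real.rpow_add hu, show b / 2 + -(b + 2) / 2 = -1 by ring,
      Real.rpow_neg_one]
    ring
  rw [hkey]
  have : 1 < b * w₀ ^ 2 / (c - w₀ ^ 2) := by
    rw [lt_div_iff₀ hu]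
    have : c < (b + 1) * w₀ ^ 2 := by
      calc c = c / (b + 1) * (b + 1) := by field_simp
        _ < w₀ ^ 2 * (b + 1) := by nlinarith
        _ = (b + 1) * w₀ ^ 2 := by ring
    nlinarith
  linarith
end

section
/- Let k > 0, let c₀, w₀ ∈ ℝ with c₀ > w₀², and let ξ ∈ ℝ. Define Ω_{n,ξ} = (n+ξ)((n+ξ)² - 1) k³ (c₀ - w₀²) / (1 + k²(n+ξ)²). Then the identity Ω_{-2,ξ} - Ω_{0,ξ} = -2 k³ (ξ - 1)² (3 - 2k²ξ + k²ξ²)(c₀ - w₀²) / ( (k²(ξ - 2)² + 1)(k²ξ² + 1) ) holds; moreover, if additionally ξ ∈ (0, 1/2] and k² < 3, then Ω_{-2,ξ} - Ω_{0,ξ} < 0. -/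
/-! Putting `Ω(-2) - Ω(0)` over the common denominator `(1 + k²(ξ-2)²)(1 + k²ξ²)` gives the
factored identity. In the numerator, `3 - 2k²ξ + k²ξ² = (3 - k²) + k²(ξ - 1)²` is positive as
soon as `k² < 3`, and `(ξ - 1)² > 0` for `ξ ≤ 1/2`, so the difference is negative. -/

/-- `Ω_{n,ξ} = dispersion k (c₀ - w₀²) (n + ξ)`. -/
noncomputable def dispersion (k C x : ℝ) : ℝ :=
  x * (x ^ 2 - 1) * k ^ 3 * C / (1 + k ^ 2 * x ^ 2)

theorem dispersion_sub_sub_two (k C ξ : ℝ) :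
    dispersion k C (ξ - 2) - dispersion k C ξ =
      -2 * k ^ 3 * (ξ - 1) ^ 2 * (3 - 2 * k ^ 2 * ξ + k ^ 2 * ξ ^ 2) * C /
        ((k ^ 2 * (ξ - 2) ^ 2 + 1) * (k ^ 2 * ξ ^ 2 + 1)) := by
  unfold dispersion
  rw [div_sub_div _ _ (by positivity) (by positivity),
    div_eq_div_iff (by positivity) (by positivity)]
  ring

theorem three_sub_two_mul_add_pos {a : ℝ} (ξ : ℝ) (ha : 0 ≤ a) (ha3 : a < 3) :
    0 < 3 - 2 * a * ξ + a * ξ ^ 2 := by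
  have : 3 - 2 * a * ξ + a * ξ ^ 2 = (3 - a) + a * (ξ - 1) ^ 2 := by ring
  rw [this]
  positivity

theorem dispersion_sub_sub_two_neg {k C ξ : ℝ} (hk : 0 < k) (hC : 0 < C) (hξ : ξ ≠ 1)
    (hk3 : k ^ 2 < 3) : dispersion k C (ξ - 2) - dispersion k C ξ < 0 := by
  rw [dispersion_sub_sub_two]
  have hξ1 : 0 < (ξ - 1) ^ 2 := sq_pos_of_ne_zero (sub_ne_zero.mpr hξ)
  have hquad := three_sub_two_mul_add_pos ξ (sq_nonneg k) hk3
  apply div_neg_of_neg_of_pos _ (by positivity)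
  have : 0 < 2 * k ^ 3 * (ξ - 1) ^ 2 * (3 - 2 * k ^ 2 * ξ + k ^ 2 * ξ ^ 2) * C := by positivity
  linarith

/-- For `k > 0`, `c₀ > w₀²`, `ξ ∈ ℝ` and
`Ω n = (n+ξ)((n+ξ)² - 1) k³ (c₀ - w₀²)/(1 + k²(n+ξ)²)`, the identity
`Ω(-2) - Ω(0) = -2k³(ξ-1)²(3 - 2k²ξ + k²ξ²)(c₀ - w₀²)/((k²(ξ-2)² + 1)(k²ξ² + 1))` holds;
moreover if `ξ ∈ (0, 1/2]` and `k² < 3` then `Ω(-2) - Ω(0) < 0`. -/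
theorem stmt14 (k c₀ w₀ ξ : ℝ) (hk : 0 < k) (hcw : w₀ ^ 2 < c₀)
    (Ω : ℤ → ℝ)
    (hΩ : ∀ n : ℤ, Ω n = ((n : ℝ) + ξ) * (((n : ℝ) + ξ) ^ 2 - 1) * k ^ 3 * (c₀ - w₀ ^ 2) /
        (1 + k ^ 2 * ((n : ℝ) + ξ) ^ 2)) :
    Ω (-2) - Ω 0 =
      -2 * k ^ 3 * (ξ - 1) ^ 2 * (3 - 2 * k ^ 2 * ξ + k ^ 2 * ξ ^ 2) * (c₀ - w₀ ^ 2) /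
        ((k ^ 2 * (ξ - 2) ^ 2 + 1) * (k ^ 2 * ξ ^ 2 + 1)) ∧
    (ξ ∈ Set.Ioc (0:ℝ) (1 / 2) → k ^ 2 < 3 → Ω (-2) - Ω 0 < 0) := by
  have hΩ' : ∀ n : ℤ, Ω n = dispersion k (c₀ - w₀ ^ 2) (n + ξ) := fun n => by
    rw [hΩ n, dispersion]
  have hdiff :
      Ω (-2) - Ω 0 = dispersion k (c₀ - w₀ ^ 2) (ξ - 2) - dispersion k (c₀ - w₀ ^ 2) ξ := by
    rw [hΩ', hΩ']
    push_cast
    ring_nf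
  refine ⟨hdiff.trans (dispersion_sub_sub_two _ _ _), fun hξ hk3 => ?_⟩
  rw [hdiff]
  exact dispersion_sub_sub_two_neg hk (sub_pos.mpr hcw) (by linarith [hξ.2]) hk3
end

section
/- Let g(k,b) = 6 + 10k² + 26k⁴ + 22k⁶ + b(12 + 8k² + 3k⁴ − 11k⁶) + b²(6 − 2k² − 5k⁴ + k⁶), and with x = k² set A(x) = x³ − 5x² − 2x + 6, B(x) = −11x³ + 3x² + 8x + 12, C(x) = 22x³ + 26x² + 10x + 6, Δ(x) = B(x)² − 4A(x)C(x), b₁(x) = (−B(x) − √Δ(x))/(2A(x)) and b₂(x) = (−B(x) + √Δ(x))/(2A(x)). Then g(k,b) < 0 holds in each of the following three cases: (1) 1 < k² < 2 + √10 and b > b₁(k²); (2) k² > 2 + √10 and b₁(k²) < b < b₂(k²); (3) k² = 2 + √10 and b > (23/921)(59 + 16√10). -/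
/-!
With `x = k²`, `g(k, b) = A b² + B b + C`, and completing the square gives
`4A (A b² + B b + C) = (2A b + B)² - Δ`.
The cubic `A` factors as `(x - 1)(x - (2 - √10))(x - (2 + √10))`, so it is negative in case (1)
and positive in case (2); in each case the constraint on `b` bounds `2A b + B` against `√Δ`,
which fixes the sign of `(2A b + B)² - Δ`. In case (3) `A` vanishes and `g` is linear in `b`
with negative slope and root `(23/921)(59 + 16√10)`.
-/

open Real

theorem four_mul_quadratic_eq_sq_sub_discrim (a b c x : ℝ) :
    4 * a * (a * x ^ 2 + b * x + c) = (2 * a * x + b) ^ 2 - discrim a b c := by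
  rw [discrim]; ring

theorem quadratic_neg_of_neg_of_lt_root {a b c x : ℝ} (ha : a < 0)
    (hx : (-b - √(discrim a b c)) / (2 * a) < x) :
    a * x ^ 2 + b * x + c < 0 := by
  have hlin : √(discrim a b c) < -(2 * a * x + b) := by
    have := (div_lt_iff_of_neg (by linarith : 2 * a < 0)).mp hx
    linarith
  have hsq : discrim a b c < (2 * a * x + b) ^ 2 := by
    rw [← neg_sq]
    exact (sqrt_lt' (lt_of_le_of_lt (sqrt_nonneg _) hlin)).mp hlin
  have hpos : 0 < 4 * a * (a * x ^ 2 + b * x + c) := by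
    rw [four_mul_quadratic_eq_sq_sub_discrim]; linarith
  exact neg_of_mul_pos_right hpos (by linarith)

theorem quadratic_neg_of_pos_of_between_roots {a b c x : ℝ} (ha : 0 < a)
    (hlo : (-b - √(discrim a b c)) / (2 * a) < x) (hhi : x < (-b + √(discrim a b c)) / (2 * a)) :
    a * x ^ 2 + b * x + c < 0 := by
  have h2a : 0 < 2 * a := by linarith
  have hlo' := (div_lt_iff₀ h2a).mp hlo
  have hhi' := (lt_div_iff₀ h2a).mp hhi
  have habs : |2 * a * x + b| < √(discrim a b c) := abs_lt.mpr ⟨by linarith, by linarith⟩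
  have hsq : (2 * a * x + b) ^ 2 < discrim a b c := by
    rw [← sq_abs]; exact (lt_sqrt (abs_nonneg _)).mp habs
  have hneg : 4 * a * (a * x ^ 2 + b * x + c) < 0 := by
    rw [four_mul_quadratic_eq_sq_sub_discrim]; linarith
  exact neg_of_mul_neg_right hneg (by linarith)

theorem cubic_eq_mul_sub_roots (x : ℝ) :
    x ^ 3 - 5 * x ^ 2 - 2 * x + 6 = (x - 1) * (x - (2 - √10)) * (x - (2 + √10)) := by
  linear_combination (x - 1) * sq_sqrt (show (0 : ℝ) ≤ 10 by norm_num)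

theorem cubic_neg_of_one_lt_of_lt {x : ℝ} (h1 : 1 < x) (h2 : x < 2 + √10) :
    x ^ 3 - 5 * x ^ 2 - 2 * x + 6 < 0 := by
  have : 1 ≤ √10 := one_le_sqrt.mpr (by norm_num)
  rw [cubic_eq_mul_sub_roots]
  exact mul_neg_of_pos_of_neg (mul_pos (by linarith) (by linarith)) (by linarith)

theorem cubic_pos_of_lt {x : ℝ} (h : 2 + √10 < x) : 0 < x ^ 3 - 5 * x ^ 2 - 2 * x + 6 := by
  have : 0 ≤ √10 := sqrt_nonneg 10
  rw [cubic_eq_mul_sub_roots]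
  exact mul_pos (mul_pos (by linarith) (by linarith)) (by linarith)

theorem index_at_two_add_sqrt_ten (b : ℝ) :
    let x := 2 + √10
    (x ^ 3 - 5 * x ^ 2 - 2 * x + 6) * b ^ 2 + (-11 * x ^ 3 + 3 * x ^ 2 + 8 * x + 12) * b
        + (22 * x ^ 3 + 26 * x ^ 2 + 10 * x + 6)
      = -(222 * √10 + 678) * (b - 23 / 921 * (59 + 16 * √10)) := by
  -- the coefficient is the quotient of the difference of the two sides by `√10 ^ 2 - 10`
  linear_combination (√10 * b ^ 2 - 11 * √10 * b + 22 * √10 + b ^ 2 - 63 * b + 21274 / 307)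
    * sq_sqrt (show (0 : ℝ) ≤ 10 by norm_num)

/-- Let
`g(k,b) = 6 + 10k² + 26k⁴ + 22k⁶ + b(12 + 8k² + 3k⁴ - 11k⁶) + b²(6 - 2k² - 5k⁴ + k⁶)` and,
with `x = k²`, `A(x) = x³ - 5x² - 2x + 6`, `B(x) = -11x³ + 3x² + 8x + 12`,
`C(x) = 22x³ + 26x² + 10x + 6`, `Δ(x) = B(x)² - 4A(x)C(x)`,
`b₁(x) = (-B(x) - √Δ(x))/(2A(x))`, `b₂(x) = (-B(x) + √Δ(x))/(2A(x))`.
Then `g(k,b) < 0` in each of the cases: (1) `1 < k² < 2 + √10` and `b > b₁(k²)`;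
(2) `k² > 2 + √10` and `b₁(k²) < b < b₂(k²)`;
(3) `k² = 2 + √10` and `b > (23/921)(59 + 16√10)`. -/
theorem stmt18 (k b x A B C Δ b₁ b₂ : ℝ)
    (hx : x = k ^ 2)
    (hA : A = x ^ 3 - 5 * x ^ 2 - 2 * x + 6)
    (hB : B = -11 * x ^ 3 + 3 * x ^ 2 + 8 * x + 12)
    (hC : C = 22 * x ^ 3 + 26 * x ^ 2 + 10 * x + 6)
    (hΔ : Δ = B ^ 2 - 4 * A * C)
    (hb₁ : b₁ = (-B - Real.sqrt Δ) / (2 * A))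
    (hb₂ : b₂ = (-B + Real.sqrt Δ) / (2 * A))
    (hcase :
      (1 < x ∧ x < 2 + Real.sqrt 10 ∧ b₁ < b) ∨
      (2 + Real.sqrt 10 < x ∧ b₁ < b ∧ b < b₂) ∨
      (x = 2 + Real.sqrt 10 ∧ 23 / 921 * (59 + 16 * Real.sqrt 10) < b)) :
    6 + 10 * k ^ 2 + 26 * k ^ 4 + 22 * k ^ 6
        + b * (12 + 8 * k ^ 2 + 3 * k ^ 4 - 11 * k ^ 6)
        + b ^ 2 * (6 - 2 * k ^ 2 - 5 * k ^ 4 + k ^ 6) < 0 := by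
  have hg : 6 + 10 * k ^ 2 + 26 * k ^ 4 + 22 * k ^ 6
        + b * (12 + 8 * k ^ 2 + 3 * k ^ 4 - 11 * k ^ 6)
        + b ^ 2 * (6 - 2 * k ^ 2 - 5 * k ^ 4 + k ^ 6) = A * b ^ 2 + B * b + C := by
    subst hx hA hB hC; ring
  have hΔ' : Δ = discrim A B C := hΔ
  rw [hg]
  subst hb₁ hb₂ hΔ'
  rcases hcase with ⟨h1, h2, hb⟩ | ⟨h1, hlo, hhi⟩ | ⟨h1, hb⟩
  · exact quadratic_neg_of_neg_of_lt_root (hA ▸ cubic_neg_of_one_lt_of_lt h1 h2) hb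
  · exact quadratic_neg_of_pos_of_between_roots (hA ▸ cubic_pos_of_lt h1) hlo hhi
  · subst hA hB hC h1
    rw [index_at_two_add_sqrt_ten]
    exact mul_neg_of_neg_of_pos (by linarith [sqrt_nonneg 10]) (by linarith)
end
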